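/- arXiv:2205.05118 — 2 statements merged into one kernel-verified Lean document; each statement's English description precedes it below -/
import Mathlib

section
/- Let q = 2^(2ℓ) with ℓ ≥ 1 and F_q = GaloisField 2 (2ℓ). Then the maximum size of an intersecting subset of SL(2,F_q) with respect to the induced action on 3-element subsets of ℙ¹(F_q) is exactly 3q. (Since the stabilizer of a 3-subset has order 6, this says the intersection density of PGL(2,q) ≅ SL(2,F_q) acting on 3-subsets is q/2.) -/
open scoped Pointwise MatrixGroups

noncomputable section

/-- The projective line over `K`. -/
abbrev Proj (K : Type*) [Field K] := Projectivization K (Fin 2 → K)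

variable {K : Type*} [Field K]

lemma GLmulVecLin_injective (g : GL (Fin 2) K) :
    Function.Injective ((g : Matrix (Fin 2) (Fin 2) K).mulVecLin) := by
  intro u v huv
  have h := congrArg ((((g⁻¹ : GL (Fin 2) K) : Matrix (Fin 2) (Fin 2) K)).mulVecLin) huv
  simp only [Matrix.mulVecLin_apply, Matrix.mulVec_mulVec] at h
  rw [show ((g⁻¹ : GL (Fin 2) K) : Matrix (Fin 2) (Fin 2) K) * (g : Matrix (Fin 2) (Fin 2) K) = 1
    from g.inv_mul, Matrix.one_mulVec, Matrix.one_mulVec] at h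
  exact h

lemma GLmulVec_ne_zero (g : GL (Fin 2) K) {v : Fin 2 → K} (hv : v ≠ 0) :
    (g : Matrix (Fin 2) (Fin 2) K).mulVec v ≠ 0 := by
  intro h
  apply hv
  have : ((g : Matrix (Fin 2) (Fin 2) K)).mulVecLin v =
      ((g : Matrix (Fin 2) (Fin 2) K)).mulVecLin 0 := by
    simpa [Matrix.mulVecLin_apply] using h
  simpa using GLmulVecLin_injective g this

/-- The action of `GL(2,K)` on the projective line by matrix-vector multiplication on
representatives. -/
instance GLProjAction : MulAction (GL (Fin 2) K) (Proj K) where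
  smul g x := Projectivization.map ((g : Matrix (Fin 2) (Fin 2) K).mulVecLin)
    (GLmulVecLin_injective g) x
  one_smul x := by
    induction x using Projectivization.ind with
    | h v hv =>
      show Projectivization.map _ _ _ = _
      simp [Projectivization.map_mk]
  mul_smul g h x := by
    induction x using Projectivization.ind with
    | h v hv =>
      show Projectivization.map _ _ _ =
        Projectivization.map _ _ (Projectivization.map _ _ _)
      simp [Projectivization.map_mk, Matrix.mulVecLin_apply, Matrix.mulVec_mulVec,
        Units.val_mul]

lemma GL_smul_mk (g : GL (Fin 2) K) (v : Fin 2 → K) (hv : v ≠ 0) :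
    g • Projectivization.mk K v hv =
      Projectivization.mk K ((g : Matrix (Fin 2) (Fin 2) K).mulVec v)
        (GLmulVec_ne_zero g hv) := by
  show Projectivization.map _ _ _ = _
  simp [Projectivization.map_mk, Matrix.mulVecLin_apply]

/-- The action of `SL(2,K)` on the projective line. -/
instance SLProjAction : MulAction (Matrix.SpecialLinearGroup (Fin 2) K) (Proj K) :=
  MulAction.compHom _ (Matrix.SpecialLinearGroup.toGL)

end

noncomputable section
variable {K : Type*} [Field K]

lemma center_smul_eq (c : GL (Fin 2) K) (hc : c ∈ Subgroup.center (GL (Fin 2) K))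
    (x : Proj K) : c • x = x := by
  have hcomm : ∀ t : Matrix.TransvectionStruct (Fin 2) K,
      Commute t.toMatrix (c : Matrix (Fin 2) (Fin 2) K) := by
    intro t
    let u : GL (Fin 2) K := ⟨t.toMatrix, t.inv.toMatrix, t.mul_inv, t.inv_mul⟩
    have h := Subgroup.mem_center_iff.mp hc u
    have := congrArg Units.val h
    simpa [u, Commute, SemiconjBy] using this
  obtain ⟨r, hr⟩ := Matrix.mem_range_scalar_of_commute_transvectionStruct hcomm
  have hr0 : r ≠ 0 := by
    intro h0
    have hne : (![1, 0] : Fin 2 → K) ≠ 0 := by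
      intro h
      have := congrFun h 0
      simp at this
    have := GLmulVec_ne_zero c hne
    rw [← hr, h0] at this
    rw [show (0 : K) = (0 : K) from rfl] at this
    apply this
    funext i
    simp [Matrix.mulVec_diagonal]
  induction x using Projectivization.ind with
  | h v hv =>
    rw [GL_smul_mk]
    rw [Projectivization.mk_eq_mk_iff]
    refine ⟨Units.mk0 r hr0, ?_⟩
    rw [← hr]
    funext i
    simp [Matrix.mulVec_diagonal]

end

noncomputable section

/-- The projective general linear group `PGL(2,K) = GL(2,K)/Z(GL(2,K))`. -/
abbrev PGL2 (K : Type*) [Field K] : Type _ :=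
  GL (Fin 2) K ⧸ Subgroup.center (GL (Fin 2) K)

variable {K : Type*} [Field K]

/-- The action of `GL(2,K)` on the projective line descends to `PGL(2,K)`. -/
instance PGLProjSMul : SMul (PGL2 K) (Proj K) :=
  ⟨fun g x => Quotient.liftOn' g (fun a => a • x) (by
    intro a b hab
    rw [QuotientGroup.leftRel_apply] at hab
    show a • x = b • x
    have hb : b = a * (a⁻¹ * b) := by group
    rw [hb, mul_smul, center_smul_eq _ hab])⟩

instance PGLProjAction : MulAction (PGL2 K) (Proj K) where
  one_smul x := center_smul_eq 1 (Subgroup.one_mem _) x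
  mul_smul g h x := by
    induction g using Quotient.inductionOn' with
    | h a =>
      induction h using Quotient.inductionOn' with
      | h b => exact mul_smul a b x

lemma PGL2_smul_mk' (a : GL (Fin 2) K) (x : Proj K) :
    (QuotientGroup.mk a : PGL2 K) • x = a • x := rfl

/-- The natural homomorphism `SL(2,K) → PGL(2,K)`. -/
def SLtoPGL2 (K : Type*) [Field K] : Matrix.SpecialLinearGroup (Fin 2) K →* PGL2 K :=
  (QuotientGroup.mk' (Subgroup.center (GL (Fin 2) K))).comp Matrix.SpecialLinearGroup.toGL

/-- `PSL(2,K)`, realized as the image of `SL(2,K)` in `PGL(2,K)`. -/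
def PSL2 (K : Type*) [Field K] : Subgroup (PGL2 K) := (SLtoPGL2 K).range

/-- A subset `F` of a group `G` acting on the projective line over `K` is *intersecting for the
action on `k`-element subsets* if any two of its elements agree on some `k`-element subset of
the projective line. -/
def IntersectingOnSubsets (G : Type*) [Group G] (K : Type*) [Field K]
    [MulAction G (Proj K)] (k : ℕ) (F : Set G) : Prop :=
  ∀ g ∈ F, ∀ h ∈ F, ∃ S : Set (Proj K), S.ncard = k ∧ g • S = h • S

end

/-!
In characteristic 2 an element of `SL(2, K)` fixing three points of the projective line is the
identity. Hence `k` stabilizes a 3-subset exactly when it permutes it with order at most 3, i.e.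
`k ^ 2 = 1` or `k ^ 3 = 1`, and by Cayley–Hamilton this means `tr k ∈ {0, 1}`. So `F` is
intersecting iff `tr (h⁻¹ g) ∈ {0, 1}` for all `g, h ∈ F`.

The upper triangular matrices with diagonal `(ζ, ζ⁻¹)`, `ζ ^ 3 = 1`, form such a family of size
`3q`. Conversely, translate `F` so that it contains `1`; then each element has trace `0` or `1`.
A trace-0 element is determined by its off-diagonal entries `(b, c)`, and `tr (h⁻¹ g)` is the
determinant of the two vectors `(b, c)`; a set of plane vectors with pairwise determinants in
`{0, 1}` has at most `q` elements. A trace-1 element has the eigenvalues `ω, ω²` (cube roots of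
unity, which exist as `q = 4 ^ ℓ`) and is determined by its ordered pair of eigenlines; the
trace condition forces these pairs to meet, and pairwise meeting ordered pairs of distinct
points of the `(q + 1)`-point line number at most `2q`. Altogether `|F| ≤ q + 2q`.
-/

open Matrix Projectivization

section Wedge

variable {K : Type*} [Field K]

def wedge (u v : Fin 2 → K) : K := u 0 * v 1 - u 1 * v 0

lemma wedge_self (v : Fin 2 → K) : wedge v v = 0 := by
  unfold wedge; ring

lemma wedge_comm (u v : Fin 2 → K) : wedge v u = -wedge u v := by
  unfold wedge; ring

lemma wedge_smul_add_smul_left (a b : K) (u v w : Fin 2 → K) :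
    wedge (a • u + b • v) w = a * wedge u w + b * wedge v w := by
  simp only [wedge, Pi.add_apply, Pi.smul_apply, smul_eq_mul]; ring

lemma wedge_smul_add_smul_right (a b : K) (u v w : Fin 2 → K) :
    wedge u (a • v + b • w) = a * wedge u v + b * wedge u w := by
  simp only [wedge, Pi.add_apply, Pi.smul_apply, smul_eq_mul]; ring

lemma wedge_smul_eq_add (u v w : Fin 2 → K) :
    wedge u v • w = wedge w v • u + wedge u w • v := by
  ext i; fin_cases i <;> simp [wedge] <;> ring

lemma trace_mul_wedge (M : Matrix (Fin 2) (Fin 2) K) (u v : Fin 2 → K) :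
    M.trace * wedge u v = wedge (M *ᵥ u) v + wedge u (M *ᵥ v) := by
  simp only [wedge, trace_fin_two, mulVec, dotProduct, Fin.sum_univ_two]; ring

lemma exists_eq_smul_of_wedge_eq_zero {u v : Fin 2 → K} (hu : u ≠ 0) (h : wedge u v = 0) :
    ∃ c : K, v = c • u := by
  unfold wedge at h
  by_cases h0 : u 0 = 0
  · have h1 : u 1 ≠ 0 := fun h1 => hu (by ext i; fin_cases i <;> simp [h0, h1])
    refine ⟨v 1 / u 1, ?_⟩
    ext i; fin_cases i <;> simp <;> field_simp
    rw [h0, zero_mul, zero_sub, neg_eq_zero, mul_eq_zero] at h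
    simp [h0, h.resolve_left h1]
  · refine ⟨v 0 / u 0, ?_⟩
    ext i; fin_cases i <;> simp <;> field_simp
    linear_combination h

lemma mk_eq_mk_iff_wedge_eq_zero {u v : Fin 2 → K} (hu : u ≠ 0) (hv : v ≠ 0) :
    mk K u hu = mk K v hv ↔ wedge u v = 0 := by
  rw [mk_eq_mk_iff']
  constructor
  · rintro ⟨a, rfl⟩
    simp only [wedge, Pi.smul_apply, smul_eq_mul]; ring
  · intro h
    obtain ⟨c, rfl⟩ := exists_eq_smul_of_wedge_eq_zero hu h
    have hc : c ≠ 0 := by rintro rfl; simp at hv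
    exact ⟨c⁻¹, by rw [smul_smul, inv_mul_cancel₀ hc, one_smul]⟩

lemma mulVec_eq_smul_of_mk_eq_mk {M : Matrix (Fin 2) (Fin 2) K} {μ : K} {u v : Fin 2 → K}
    {hu : u ≠ 0} {hv : v ≠ 0} (h : mk K u hu = mk K v hv) (hMu : M *ᵥ u = μ • u) :
    M *ᵥ v = μ • v := by
  obtain ⟨a, rfl⟩ := (mk_eq_mk_iff' K _ _ hv hu).mp h.symm
  rw [mulVec_smul, hMu, smul_comm]

lemma eq_of_mulVec_eq_of_wedge_ne_zero {M N : Matrix (Fin 2) (Fin 2) K} {u v : Fin 2 → K}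
    (huv : wedge u v ≠ 0) (hu : M *ᵥ u = N *ᵥ u) (hv : M *ᵥ v = N *ᵥ v) : M = N := by
  refine ext_iff_mulVec.mpr fun w => smul_right_injective _ huv ?_
  show wedge u v • M *ᵥ w = wedge u v • N *ᵥ w
  rw [← mulVec_smul, ← mulVec_smul, wedge_smul_eq_add u v w]
  simp only [mulVec_add, mulVec_smul, hu, hv]

lemma wedge_ne_zero_of_eigenvalue_ne {M : Matrix (Fin 2) (Fin 2) K} {α β : K} {u v : Fin 2 → K}
    (hu : u ≠ 0) (hv : v ≠ 0) (hMu : M *ᵥ u = α • u) (hMv : M *ᵥ v = β • v) (hαβ : α ≠ β) :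
    wedge u v ≠ 0 := by
  intro h
  have hMu' := mulVec_eq_smul_of_mk_eq_mk ((mk_eq_mk_iff_wedge_eq_zero hv hu).mpr
    (by rw [wedge_comm, h, neg_zero])) hMv
  exact hαβ (smul_left_injective K hu (hMu.symm.trans hMu'))

lemma exists_mulVec_eq_smul {M : Matrix (Fin 2) (Fin 2) K} {μ : K}
    (hμ : μ ^ 2 - M.trace * μ + M.det = 0) : ∃ v ≠ 0, M *ᵥ v = μ • v := by
  have hdet : (M - μ • 1).det = 0 := by
    rw [det_fin_two] at hμ ⊢
    simp [trace_fin_two] at hμ ⊢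
    linear_combination hμ
  obtain ⟨v, hv, hMv⟩ := exists_mulVec_eq_zero_iff.mpr hdet
  exact ⟨v, hv, by rwa [sub_mulVec, smul_mulVec, one_mulVec, sub_eq_zero] at hMv⟩

lemma eq_smul_one_of_three_eigenvectors {M : Matrix (Fin 2) (Fin 2) K} {α β γ : K}
    {u v w : Fin 2 → K} (huv : wedge u v ≠ 0) (hwv : wedge w v ≠ 0) (huw : wedge u w ≠ 0)
    (hMu : M *ᵥ u = α • u) (hMv : M *ᵥ v = β • v) (hMw : M *ᵥ w = γ • w) :
    M = α • 1 := by
  have hexp : (γ * wedge w v) • u + (γ * wedge u w) • v =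
      (α * wedge w v) • u + (β * wedge u w) • v := by
    calc (γ * wedge w v) • u + (γ * wedge u w) • v = γ • wedge u v • w := by
          rw [wedge_smul_eq_add, smul_add, smul_smul, smul_smul]
      _ = M *ᵥ (wedge u v • w) := by rw [mulVec_smul, hMw, smul_comm]
      _ = (α * wedge w v) • u + (β * wedge u w) • v := by
          rw [wedge_smul_eq_add, mulVec_add, mulVec_smul, mulVec_smul, hMu, hMv, smul_smul,
            smul_smul, mul_comm α, mul_comm β]
  have hγα : γ = α := by
    have := congrArg (wedge · v) hexp
    simp only [wedge_smul_add_smul_left, wedge_self, mul_zero, add_zero] at this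
    exact mul_right_cancel₀ hwv (mul_right_cancel₀ huv (by linear_combination this))
  have hγβ : γ = β := by
    have := congrArg (wedge u ·) hexp
    simp only [wedge_smul_add_smul_right, wedge_self, mul_zero, zero_add] at this
    exact mul_right_cancel₀ huw (mul_right_cancel₀ huv (by linear_combination this))
  refine eq_of_mulVec_eq_of_wedge_ne_zero huv ?_ ?_ <;>
    simp only [smul_mulVec, one_mulVec, hMu, hMv, ← hγα, hγβ]

lemma ncard_le_of_wedge_eq_zero_or_one [Finite K] (hK : 4 ≤ Nat.card K) {P : Set (Fin 2 → K)}
    (hP : ∀ u ∈ P, ∀ v ∈ P, wedge u v = 0 ∨ wedge u v = 1) : P.ncard ≤ Nat.card K := by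
  by_cases h : ∃ u ∈ P, ∃ v ∈ P, wedge u v = 1
  · obtain ⟨u, hu, v, hv, huv⟩ := h
    have hsub : P ⊆ (fun c : K × K => c.1 • u + c.2 • v) '' ({0, 1} ×ˢ {0, 1}) := by
      intro w hw
      refine ⟨(wedge w v, wedge u w), ⟨hP w hw v hv, hP u hu w hw⟩, ?_⟩
      simpa [huv] using (wedge_smul_eq_add u v w).symm
    calc P.ncard ≤ _ := Set.ncard_le_ncard hsub (Set.toFinite _)
      _ ≤ ({0, 1} ×ˢ {0, 1} : Set (K × K)).ncard := Set.ncard_image_le (Set.toFinite _)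
      _ = 4 := by rw [Set.ncard_prod, Set.ncard_pair zero_ne_one]
      _ ≤ Nat.card K := hK
  push Not at h
  by_cases hP0 : P ⊆ {0}
  · calc P.ncard ≤ ({0} : Set (Fin 2 → K)).ncard := Set.ncard_le_ncard hP0
      _ ≤ Nat.card K := by rw [Set.ncard_singleton]; omega
  obtain ⟨u, hu, hu0⟩ := Set.not_subset.mp hP0
  have hsub : P ⊆ (· • u) '' Set.univ := fun v hv =>
    let ⟨c, hc⟩ := exists_eq_smul_of_wedge_eq_zero hu0 ((hP u hu v hv).resolve_right (h u hu v hv))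
    ⟨c, trivial, hc.symm⟩
  calc P.ncard ≤ _ := Set.ncard_le_ncard hsub (Set.toFinite _)
    _ ≤ (Set.univ : Set K).ncard := Set.ncard_image_le (Set.toFinite _)
    _ = Nat.card K := Set.ncard_univ K

end Wedge

lemma Matrix.mul_self_fin_two {R : Type*} [CommRing R] (M : Matrix (Fin 2) (Fin 2) R) :
    M * M = M.trace • M - M.det • 1 := by
  ext i j
  fin_cases i <;> fin_cases j <;> simp [mul_apply, trace_fin_two, det_fin_two] <;> ring

lemma Equiv.Perm.sq_eq_one_or_pow_three_eq_one_of_card_eq_three {β : Type*} [Finite β]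
    (hβ : Nat.card β = 3) (σ : Equiv.Perm β) : σ ^ 2 = 1 ∨ σ ^ 3 = 1 := by
  let e := (Finite.equivFinOfCardEq hβ).permCongrHom
  have hfin : ∀ τ : Equiv.Perm (Fin 3), τ ^ 2 = 1 ∨ τ ^ 3 = 1 := by decide
  simpa only [← map_pow, e.map_eq_one_iff] using hfin (e σ)

section GroupAction

variable {G α : Type*} [Group G] [MulAction G α]

lemma sq_eq_one_or_pow_three_eq_one_of_smul_set_eq {S : Set α} (hS : S.ncard = 3)
    (hfix : ∀ g : G, (∀ x ∈ S, g • x = x) → g = 1) {g : G} (hg : g • S = S) :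
    g ^ 2 = 1 ∨ g ^ 3 = 1 := by
  have : Finite S := Set.finite_of_ncard_ne_zero (by omega)
  let σ := MulAction.toPermHom (MulAction.stabilizer G S) S ⟨g, hg⟩
  have hσ : ∀ n : ℕ, σ ^ n = 1 → g ^ n = 1 := by
    intro n hn
    refine hfix _ fun x hx => ?_
    rw [← map_pow] at hn
    simpa using congrArg (fun τ : Equiv.Perm S => (τ ⟨x, hx⟩ : α)) hn
  exact (Equiv.Perm.sq_eq_one_or_pow_three_eq_one_of_card_eq_three
    (by rwa [Nat.card_coe_set_eq]) σ).imp (hσ 2) (hσ 3)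

lemma exists_ncard_eq_three_smul_set_eq_of_pow_three {g : G} (hg : g ^ 3 = 1) {p : α}
    (hp : g • p ≠ p) : ∃ S : Set α, S.ncard = 3 ∧ g • S = S := by
  have h3 : g • (g ^ 2 • p) = p := by rw [smul_smul, ← pow_succ', hg, one_smul]
  refine ⟨{p, g • p, g ^ 2 • p}, Set.ncard_eq_three.mpr ⟨_, _, _, hp.symm, ?_, ?_, rfl⟩, ?_⟩
  · intro h
    apply hp
    conv_lhs => rw [h, h3]
  · intro h
    apply hp
    rwa [pow_two, mul_smul, smul_left_cancel_iff, eq_comm] at h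
  · simp only [Set.smul_set_insert, Set.smul_set_singleton, h3, smul_smul, ← pow_two]
    ext; simp only [Set.mem_insert_iff, Set.mem_singleton_iff]; tauto

lemma exists_ncard_eq_three_smul_set_eq_of_sq {g : G} (hg : g ^ 2 = 1) {p q : α}
    (hq : g • q = q) (hp : g • p ≠ p) : ∃ S : Set α, S.ncard = 3 ∧ g • S = S := by
  have h2 : g • (g • p) = p := by rw [smul_smul, ← pow_two, hg, one_smul]
  refine ⟨{q, p, g • p}, Set.ncard_eq_three.mpr ⟨_, _, _, ?_, ?_, hp.symm, rfl⟩, ?_⟩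
  · rintro rfl; exact hp hq
  · rintro rfl; exact hp (hq.symm.trans h2)
  · simp only [Set.smul_set_insert, Set.smul_set_singleton, h2, hq]
    ext; simp only [Set.mem_insert_iff, Set.mem_singleton_iff]; tauto

end GroupAction

section Pairs

variable {X : Type*} [Finite X]

lemma ncard_le_of_forall_fst_eq_or_snd_eq {P : Set (X × X)} (x : X) (hdiag : ∀ p ∈ P, p.1 ≠ p.2)
    (hx : ∀ p ∈ P, p.1 = x ∨ p.2 = x) : P.ncard ≤ 2 * (Nat.card X - 1) := by
  have hsub : P ⊆ Prod.mk x '' {x}ᶜ ∪ (fun y => (y, x)) '' {x}ᶜ := by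
    rintro ⟨a, b⟩ hp
    rcases hx _ hp with rfl | rfl
    · exact Or.inl ⟨b, (hdiag _ hp).symm, rfl⟩
    · exact Or.inr ⟨a, hdiag _ hp, rfl⟩
  calc P.ncard ≤ (Prod.mk x '' {x}ᶜ ∪ (fun y => (y, x)) '' {x}ᶜ).ncard :=
        Set.ncard_le_ncard hsub
    _ ≤ (Prod.mk x '' {x}ᶜ).ncard + ((fun y => (y, x)) '' {x}ᶜ).ncard := Set.ncard_union_le _ _
    _ ≤ ({x}ᶜ : Set X).ncard + ({x}ᶜ : Set X).ncard :=
        add_le_add (Set.ncard_image_le (Set.toFinite _)) (Set.ncard_image_le (Set.toFinite _))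
    _ = 2 * (Nat.card X - 1) := by rw [Set.ncard_compl, Set.ncard_singleton]; ring

lemma ncard_le_of_pairwise_meet (hX : 4 ≤ Nat.card X) {P : Set (X × X)}
    (hdiag : ∀ p ∈ P, p.1 ≠ p.2)
    (hmeet : ∀ p ∈ P, ∀ q ∈ P, p.1 = q.1 ∨ p.1 = q.2 ∨ p.2 = q.1 ∨ p.2 = q.2) :
    P.ncard ≤ 2 * (Nat.card X - 1) := by
  classical
  rcases P.eq_empty_or_nonempty with rfl | ⟨p₀, hp₀⟩
  · simp
  by_cases hx : ∀ p ∈ P, p.1 = p₀.1 ∨ p.2 = p₀.1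
  · exact ncard_le_of_forall_fst_eq_or_snd_eq _ hdiag hx
  by_cases hy : ∀ p ∈ P, p.1 = p₀.2 ∨ p.2 = p₀.2
  · exact ncard_le_of_forall_fst_eq_or_snd_eq _ hdiag hy
  push Not at hx hy
  obtain ⟨p₁, hp₁, hp₁x⟩ := hx
  obtain ⟨p₂, hp₂, hp₂y⟩ := hy
  -- every pair meets the three sides `p₀, p₁, p₂` of a triangle, so lies inside it
  set T : Finset X := {p₀.1, p₁.1, p₁.2}
  have hsub : P ⊆ T.offDiag := by
    intro p hp
    simp only [T, Finset.coe_offDiag, Set.mem_offDiag, Finset.mem_coe, Finset.mem_insert,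
      Finset.mem_singleton]
    grind [hmeet p hp p₀ hp₀, hmeet p hp p₁ hp₁, hmeet p hp p₂ hp₂, hmeet p₀ hp₀ p₁ hp₁,
      hmeet p₀ hp₀ p₂ hp₂, hmeet p₁ hp₁ p₂ hp₂, hdiag p hp, hdiag p₀ hp₀, hdiag p₁ hp₁]
  have hT : T.card ≤ 3 := Finset.card_le_three
  calc P.ncard ≤ (T.offDiag : Set (X × X)).ncard := Set.ncard_le_ncard hsub (Finset.finite_toSet _)
    _ = T.card * T.card - T.card := by rw [Set.ncard_coe_finset, Finset.offDiag_card]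
    _ ≤ 2 * (Nat.card X - 1) := by interval_cases T.card <;> omega

end Pairs

section SL2

variable {K : Type*} [Field K]

local notation:1024 "↑ₘ" A:1024 => ((A : SL(2, K)) : Matrix (Fin 2) (Fin 2) K)

lemma SL_coe_inj {g h : SL(2, K)} : ↑ₘg = ↑ₘh ↔ g = h := Subtype.ext_iff.symm

lemma SL_mulVec_ne_zero (g : SL(2, K)) {v : Fin 2 → K} (hv : v ≠ 0) : ↑ₘg *ᵥ v ≠ 0 :=
  GLmulVec_ne_zero (SpecialLinearGroup.toGL g) hv

lemma SL_smul_mk (g : SL(2, K)) {v : Fin 2 → K} (hv : v ≠ 0) :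
    g • mk K v hv = mk K (↑ₘg *ᵥ v) (SL_mulVec_ne_zero g hv) :=
  GL_smul_mk _ v hv

lemma smul_mk_eq_self_iff (g : SL(2, K)) {v : Fin 2 → K} (hv : v ≠ 0) :
    g • mk K v hv = mk K v hv ↔ ∃ c : K, ↑ₘg *ᵥ v = c • v := by
  rw [SL_smul_mk, mk_eq_mk_iff']
  exact exists_congr fun _ => eq_comm

lemma exists_three_points : ∃ x y z : Proj K, x ≠ y ∧ x ≠ z ∧ y ≠ z := by
  have h10 : (![1, 0] : Fin 2 → K) ≠ 0 := fun h => by simpa using congrFun h 0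
  have h01 : (![0, 1] : Fin 2 → K) ≠ 0 := fun h => by simpa using congrFun h 1
  have h11 : (![1, 1] : Fin 2 → K) ≠ 0 := fun h => by simpa using congrFun h 0
  refine ⟨mk K _ h10, mk K _ h01, mk K _ h11, ?_, ?_, ?_⟩ <;>
    simp [mk_eq_mk_iff_wedge_eq_zero, wedge]

lemma card_proj [Finite K] : Nat.card (Proj K) = Nat.card K + 1 :=
  Projectivization.card_of_finrank_two K (Fin 2 → K) (Module.finrank_fin_fun K)

lemma trace_inv_mul (g h : SL(2, K)) :
    (↑ₘ(h⁻¹ * g)).trace = h 1 1 * g 0 0 - h 0 1 * g 1 0 - h 1 0 * g 0 1 + h 0 0 * g 1 1 := by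
  simp [Matrix.SpecialLinearGroup.coe_inv, adjugate_fin_two, trace_fin_two, vecMul,
    dotProduct, Fin.sum_univ_two]
  ring

lemma inv_mulVec_of_mulVec_eq_smul {h : SL(2, K)} {μ : K} (hμ : μ ^ 3 = 1) {w : Fin 2 → K}
    (hw : ↑ₘh *ᵥ w = μ • w) : ↑ₘh⁻¹ *ᵥ w = μ ^ 2 • w := by
  have : ↑ₘh⁻¹ *ᵥ (↑ₘh *ᵥ w) = w := by
    rw [mulVec_mulVec, ← Matrix.SpecialLinearGroup.coe_mul, inv_mul_cancel,
      Matrix.SpecialLinearGroup.coe_one, one_mulVec]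
  rw [hw, mulVec_smul] at this
  calc ↑ₘh⁻¹ *ᵥ w = μ ^ 3 • ↑ₘh⁻¹ *ᵥ w := by rw [hμ, one_smul]
    _ = μ ^ 2 • w := by rw [pow_succ, mul_smul, this]

/-- By `wedge_smul_eq_add`, `wedge w₁ v₂, wedge v₁ w₁` and `wedge w₂ v₂, wedge v₁ w₂` are, up to the
factor `wedge v₁ v₂`, the coordinates of `w₁` and `w₂` in the eigenbasis `v₁, v₂` of `g`. -/
lemma trace_inv_mul_mul_eq_of_eigenvectors {ω : K} (hω : ω ^ 2 + ω + 1 = 0) {g h : SL(2, K)}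
    {v₁ v₂ w₁ w₂ : Fin 2 → K} (hv₁ : ↑ₘg *ᵥ v₁ = ω • v₁) (hv₂ : ↑ₘg *ᵥ v₂ = ω ^ 2 • v₂)
    (hw₁ : ↑ₘh *ᵥ w₁ = ω • w₁) (hw₂ : ↑ₘh *ᵥ w₂ = ω ^ 2 • w₂) (hv : wedge v₁ v₂ ≠ 0) :
    (↑ₘ(h⁻¹ * g)).trace * (wedge w₁ v₂ * wedge v₁ w₂ - wedge v₁ w₁ * wedge w₂ v₂) =
      2 * (wedge w₁ v₂ * wedge v₁ w₂) + wedge v₁ w₁ * wedge w₂ v₂ := by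
  have hω3 : ω ^ 3 = 1 := by linear_combination (ω - 1) * hω
  have hbasis : ∀ x₁ x₂ y₁ y₂ : K, wedge (x₁ • v₁ + x₂ • v₂) (y₁ • v₁ + y₂ • v₂) =
      (x₁ * y₂ - x₂ * y₁) * wedge v₁ v₂ := by
    intro x₁ x₂ y₁ y₂
    simp only [wedge_smul_add_smul_left, wedge_smul_add_smul_right, wedge_self, wedge_comm v₁ v₂]
    ring
  have hM : ∀ (μ : K) (w : Fin 2 → K), ↑ₘh⁻¹ *ᵥ w = μ • w →
      ↑ₘ(g * h⁻¹) *ᵥ (wedge v₁ v₂ • w) =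
        (μ * ω * wedge w v₂) • v₁ + (μ * ω ^ 2 * wedge v₁ w) • v₂ := by
    intro μ w hw
    rw [Matrix.SpecialLinearGroup.coe_mul, ← mulVec_mulVec, mulVec_smul, hw, smul_comm,
      wedge_smul_eq_add, mulVec_smul, mulVec_add, mulVec_smul, mulVec_smul, hv₁, hv₂]
    module
  have hM₁ := hM _ _ (inv_mulVec_of_mulVec_eq_smul hω3 hw₁)
  have hM₂ := hM _ _ (inv_mulVec_of_mulVec_eq_smul (by rw [← pow_mul, pow_mul', hω3, one_pow]) hw₂)
  have key := trace_mul_wedge ↑ₘ(g * h⁻¹) (wedge v₁ v₂ • w₁) (wedge v₁ v₂ • w₂)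
  rw [hM₁, hM₂, wedge_smul_eq_add v₁ v₂ w₁, wedge_smul_eq_add v₁ v₂ w₂, hbasis, hbasis,
    hbasis, Matrix.SpecialLinearGroup.coe_mul, trace_mul_comm,
    ← Matrix.SpecialLinearGroup.coe_mul] at key
  refine mul_right_cancel₀ hv ?_
  linear_combination key + (wedge w₁ v₂ * wedge v₁ w₂ * (ω - 1) * (ω ^ 3 + 2) -
    wedge v₁ w₁ * wedge w₂ v₂ * (ω ^ 3 - ω + 1)) * wedge v₁ v₂ * hω

def PairwiseTraceZeroOrOne (F : Set SL(2, K)) : Prop :=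
  ∀ g ∈ F, ∀ h ∈ F, (↑ₘ(h⁻¹ * g)).trace = 0 ∨ (↑ₘ(h⁻¹ * g)).trace = 1

lemma PairwiseTraceZeroOrOne.mono {F₁ F₂ : Set SL(2, K)} (hF₂ : PairwiseTraceZeroOrOne F₂)
    (h : F₁ ⊆ F₂) : PairwiseTraceZeroOrOne F₁ :=
  fun g hg g' hg' => hF₂ g (h hg) g' (h hg')

def upperTriangular (u : Kˣ) (b : K) : SL(2, K) :=
  ⟨!![(u : K), b; 0, (u⁻¹ : Kˣ)], by simp [det_fin_two_of]⟩

lemma trace_upperTriangular_inv_mul (u v : Kˣ) (b c : K) :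
    (↑ₘ((upperTriangular v c)⁻¹ * upperTriangular u b)).trace =
      (v : K)⁻¹ * u + ((v : K)⁻¹ * u)⁻¹ := by
  rw [trace_inv_mul]
  simp [upperTriangular, Units.val_inv_eq_inv_val, mul_comm]

def upperTriangularCubeRoots (K : Type*) [Field K] : Set SL(2, K) :=
  Set.range fun p : rootsOfUnity 3 K × K => upperTriangular (p.1 : Kˣ) p.2

lemma ncard_upperTriangularCubeRoots [Finite K] {ω : K} (hω : IsPrimitiveRoot ω 3) :
    (upperTriangularCubeRoots K).ncard = 3 * Nat.card K := by
  rw [upperTriangularCubeRoots, Set.ncard_range_of_injective, Nat.card_prod,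
    hω.card_rootsOfUnity]
  rintro ⟨u, b⟩ ⟨v, c⟩ h
  have h00 := congrArg (fun g : SL(2, K) => g 0 0) h
  have h01 := congrArg (fun g : SL(2, K) => g 0 1) h
  simp only [upperTriangular, of_apply, cons_val', cons_val_zero, cons_val_one,
    empty_val', cons_val_fin_one] at h00 h01
  exact Prod.ext (Subtype.ext (Units.ext h00)) h01

variable [CharP K 2]

lemma eq_one_of_fixes_three_points (g : SL(2, K)) {x y z : Proj K} (hxy : x ≠ y)
    (hxz : x ≠ z) (hyz : y ≠ z) (hx : g • x = x) (hy : g • y = y) (hz : g • z = z) :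
    g = 1 := by
  induction x using Projectivization.ind with | h u hu =>
  induction y using Projectivization.ind with | h v hv =>
  induction z using Projectivization.ind with | h w hw =>
  obtain ⟨α, hgu⟩ := (smul_mk_eq_self_iff g hu).mp hx
  obtain ⟨β, hgv⟩ := (smul_mk_eq_self_iff g hv).mp hy
  obtain ⟨γ, hgw⟩ := (smul_mk_eq_self_iff g hw).mp hz
  rw [Ne, mk_eq_mk_iff_wedge_eq_zero] at hxy hxz hyz
  have hwv : wedge w v ≠ 0 := by rwa [wedge_comm, neg_ne_zero]
  have hg := eq_smul_one_of_three_eigenvectors hxy hwv hxz hgu hgv hgw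
  have hα : α ^ 2 = 1 ^ 2 := by
    simpa [hg, det_smul, one_pow] using g.2
  ext i j
  simp [hg, CharTwo.sq_injective hα]

lemma exists_smul_ne_self {g : SL(2, K)} (hg : g ≠ 1) : ∃ p : Proj K, g • p ≠ p := by
  obtain ⟨x, y, z, hxy, hxz, hyz⟩ := exists_three_points (K := K)
  by_contra! h
  exact hg (eq_one_of_fixes_three_points g hxy hxz hyz (h x) (h y) (h z))

lemma SL_mul_self (g : SL(2, K)) : ↑ₘg * ↑ₘg = (↑ₘg).trace • ↑ₘg + 1 := by
  rw [mul_self_fin_two, Matrix.SpecialLinearGroup.det_coe, one_smul, CharTwo.sub_eq_add]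

lemma trace_one_fin_two_eq_zero : (1 : Matrix (Fin 2) (Fin 2) K).trace = 0 := by
  simp [CharTwo.two_eq_zero]

lemma sq_eq_one_iff_trace_eq_zero (g : SL(2, K)) : g ^ 2 = 1 ↔ (↑ₘg).trace = 0 := by
  rw [← SL_coe_inj, Matrix.SpecialLinearGroup.coe_pow, Matrix.SpecialLinearGroup.coe_one, sq,
    SL_mul_self]
  constructor
  · intro h
    have := congrArg Matrix.trace h
    rw [trace_add, trace_smul, trace_one_fin_two_eq_zero, add_zero, smul_eq_mul] at this
    exact pow_eq_zero_iff (n := 2) two_ne_zero |>.mp (by rw [sq]; exact this)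
  · intro h
    rw [h, zero_smul, zero_add]

lemma SL_pow_three (g : SL(2, K)) :
    ↑ₘ(g ^ 3) = ((↑ₘg).trace ^ 2 + 1) • ↑ₘg + (↑ₘg).trace • 1 := by
  rw [Matrix.SpecialLinearGroup.coe_pow, pow_succ, sq, SL_mul_self, add_mul, smul_mul_assoc,
    SL_mul_self, one_mul]
  module

lemma trace_eq_zero_or_one_of_pow_three_eq_one {g : SL(2, K)} (hg : g ^ 3 = 1) :
    (↑ₘg).trace = 0 ∨ (↑ₘg).trace = 1 := by
  have h := congrArg Matrix.trace (congrArg (↑ₘ·) hg)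
  simp only [SL_pow_three, Matrix.SpecialLinearGroup.coe_one, trace_add, trace_smul,
    trace_one_fin_two_eq_zero, smul_eq_mul, mul_zero, add_zero] at h
  have : (↑ₘg).trace * ((↑ₘg).trace - 1) ^ 2 = 0 := by
    linear_combination h - (↑ₘg).trace ^ 2 * CharTwo.two_eq_zero (R := K)
  rcases mul_eq_zero.mp this with h0 | h1
  · exact Or.inl h0
  · exact Or.inr (sub_eq_zero.mp (pow_eq_zero_iff two_ne_zero |>.mp h1))

lemma pow_three_eq_one_of_trace_eq_one {g : SL(2, K)} (hg : (↑ₘg).trace = 1) : g ^ 3 = 1 := by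
  rw [← SL_coe_inj, SL_pow_three, hg, Matrix.SpecialLinearGroup.coe_one]
  simp [CharTwo.add_self_eq_zero]

lemma exists_smul_eq_self_of_trace_eq_zero {g : SL(2, K)} (hg : (↑ₘg).trace = 0) :
    ∃ q : Proj K, g • q = q := by
  obtain ⟨v, hv, hgv⟩ := exists_mulVec_eq_smul (M := ↑ₘg) (μ := 1)
    (by simp [hg, CharTwo.add_self_eq_zero])
  exact ⟨mk K v hv, (smul_mk_eq_self_iff g hv).mpr ⟨1, hgv⟩⟩

theorem exists_ncard_eq_three_smul_set_eq_iff (g : SL(2, K)) :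
    (∃ S : Set (Proj K), S.ncard = 3 ∧ g • S = S) ↔ (↑ₘg).trace = 0 ∨ (↑ₘg).trace = 1 := by
  constructor
  · rintro ⟨S, hS, hgS⟩
    have hfix : ∀ h : SL(2, K), (∀ x ∈ S, h • x = x) → h = 1 := by
      obtain ⟨x, y, z, hxy, hxz, hyz, rfl⟩ := Set.ncard_eq_three.mp hS
      intro h hh
      exact eq_one_of_fixes_three_points h hxy hxz hyz (hh x (by simp)) (hh y (by simp))
        (hh z (by simp))
    rcases sq_eq_one_or_pow_three_eq_one_of_smul_set_eq hS hfix hgS with h2 | h3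
    · exact Or.inl ((sq_eq_one_iff_trace_eq_zero g).mp h2)
    · exact trace_eq_zero_or_one_of_pow_three_eq_one h3
  · intro htr
    by_cases hg : g = 1
    · obtain ⟨x, y, z, hxy, hxz, hyz⟩ := exists_three_points (K := K)
      exact ⟨{x, y, z}, Set.ncard_eq_three.mpr ⟨x, y, z, hxy, hxz, hyz, rfl⟩, by rw [hg, one_smul]⟩
    obtain ⟨p, hp⟩ := exists_smul_ne_self hg
    rcases htr with h0 | h1
    · obtain ⟨q, hq⟩ := exists_smul_eq_self_of_trace_eq_zero h0
      exact exists_ncard_eq_three_smul_set_eq_of_sq ((sq_eq_one_iff_trace_eq_zero g).mpr h0) hq hp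
    · exact exists_ncard_eq_three_smul_set_eq_of_pow_three (pow_three_eq_one_of_trace_eq_one h1) hp

theorem intersectingOnSubsets_three_iff (F : Set SL(2, K)) :
    IntersectingOnSubsets _ K 3 F ↔ PairwiseTraceZeroOrOne F := by
  refine forall₂_congr fun g _ => forall₂_congr fun h _ => ?_
  rw [← exists_ncard_eq_three_smul_set_eq_iff]
  refine exists_congr fun S => and_congr_right fun _ => ?_
  rw [mul_smul, inv_smul_eq_iff, eq_comm]

lemma add_inv_eq_zero_or_one_of_pow_three {x : K} (hx : x ^ 3 = 1) :
    x + x⁻¹ = 0 ∨ x + x⁻¹ = 1 := by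
  have hinv : x⁻¹ = x ^ 2 := inv_eq_of_mul_eq_one_right (by rw [← pow_succ', hx])
  have : (x + x⁻¹) * (x + x⁻¹ - 1) = 0 := by
    rw [hinv]
    linear_combination x * hx + x ^ 3 * CharTwo.two_eq_zero (R := K)
  exact (mul_eq_zero.mp this).imp id sub_eq_zero.mp

lemma pairwiseTraceZeroOrOne_upperTriangularCubeRoots :
    PairwiseTraceZeroOrOne (upperTriangularCubeRoots K) := by
  rintro _ ⟨⟨u, b⟩, rfl⟩ _ ⟨⟨v, c⟩, rfl⟩
  rw [trace_upperTriangular_inv_mul]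
  apply add_inv_eq_zero_or_one_of_pow_three
  have hu := congrArg Units.val ((mem_rootsOfUnity 3 _).mp u.2)
  have hv := congrArg Units.val ((mem_rootsOfUnity 3 _).mp v.2)
  push_cast at hu hv
  rw [mul_pow, inv_pow, hu, hv, inv_one, one_mul]

lemma wedge_eq_zero_of_trace_inv_mul {ω : K} (hω : ω ^ 2 + ω + 1 = 0) {g h : SL(2, K)}
    {v₁ v₂ w₁ w₂ : Fin 2 → K} (hv₁ : ↑ₘg *ᵥ v₁ = ω • v₁) (hv₂ : ↑ₘg *ᵥ v₂ = ω ^ 2 • v₂)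
    (hw₁ : ↑ₘh *ᵥ w₁ = ω • w₁) (hw₂ : ↑ₘh *ᵥ w₂ = ω ^ 2 • w₂) (hv : wedge v₁ v₂ ≠ 0)
    (htr : (↑ₘ(h⁻¹ * g)).trace = 0 ∨ (↑ₘ(h⁻¹ * g)).trace = 1) :
    wedge v₁ w₁ = 0 ∨ wedge v₁ w₂ = 0 ∨ wedge v₂ w₁ = 0 ∨ wedge v₂ w₂ = 0 := by
  have key := trace_inv_mul_mul_eq_of_eigenvectors hω hv₁ hv₂ hw₁ hw₂ hv
  rw [wedge_comm v₂ w₂, wedge_comm v₂ w₁] at key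
  have h2 := CharTwo.two_eq_zero (R := K)
  rcases htr with h0 | h1
  · have : wedge v₁ w₁ * wedge v₂ w₂ = 0 := by
      rw [h0] at key
      linear_combination key - wedge v₂ w₁ * wedge v₁ w₂ * h2
    rcases mul_eq_zero.mp this with h | h <;> simp [h]
  · have : wedge v₂ w₁ * wedge v₁ w₂ = 0 := by
      rw [h1] at key
      linear_combination key - wedge v₁ w₁ * wedge v₂ w₂ * h2
    rcases mul_eq_zero.mp this with h | h <;> simp [h]

lemma ncard_le_of_trace_eq_zero [Finite K] (hK : 4 ≤ Nat.card K) {F : Set SL(2, K)}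
    (hF : PairwiseTraceZeroOrOne F) (h0 : ∀ g ∈ F, (↑ₘg).trace = 0) : F.ncard ≤ Nat.card K := by
  have hdiag : ∀ g ∈ F, g 1 1 = g 0 0 := fun g hg => by
    have := h0 g hg
    rw [trace_fin_two, CharTwo.add_eq_zero] at this
    exact this.symm
  let e : SL(2, K) → Fin 2 → K := fun g => ![g 0 1, g 1 0]
  have he : Set.InjOn e F := by
    intro g hg h hh hgh
    have h01 : g 0 1 = h 0 1 := congrFun hgh 0
    have h10 : g 1 0 = h 1 0 := congrFun hgh 1
    have h00 : g 0 0 = h 0 0 := by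
      have hg1 := g.2
      have hh1 := h.2
      rw [det_fin_two, hdiag g hg] at hg1
      rw [det_fin_two, hdiag h hh] at hh1
      exact CharTwo.sq_injective (by linear_combination hg1 - hh1 + g 1 0 * h01 + h 0 1 * h10)
    ext i j
    fin_cases i <;> fin_cases j
    · exact h00
    · exact h01
    · exact h10
    · simp [hdiag g hg, hdiag h hh, h00]
  rw [← he.ncard_image]
  apply ncard_le_of_wedge_eq_zero_or_one hK
  rintro _ ⟨g, hg, rfl⟩ _ ⟨h, hh, rfl⟩
  have : wedge (e g) (e h) = (↑ₘ(h⁻¹ * g)).trace := by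
    rw [trace_inv_mul, hdiag g hg, hdiag h hh]
    simp only [wedge, e, Matrix.cons_val_zero, Matrix.cons_val_one]
    linear_combination (g 0 1 * h 1 0 - h 0 0 * g 0 0) * CharTwo.two_eq_zero (R := K)
  rw [this]
  exact hF g hg h hh

lemma ncard_le_of_trace_eq_one [Finite K] {ω : K} (hω : ω ^ 2 + ω + 1 = 0)
    (hK : 3 ≤ Nat.card K) {F : Set SL(2, K)} (hF : PairwiseTraceZeroOrOne F)
    (h1 : ∀ g ∈ F, (↑ₘg).trace = 1) : F.ncard ≤ 2 * Nat.card K := by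
  have heig : ∀ μ : K, μ ^ 2 + μ + 1 = 0 → ∀ g : F, ∃ v ≠ 0, ↑ₘ(g : SL(2, K)) *ᵥ v = μ • v :=
    fun μ hμ g => exists_mulVec_eq_smul (by
      rw [h1 g g.2, Matrix.SpecialLinearGroup.det_coe, one_mul, sub_eq_add_neg, CharTwo.neg_eq]
      exact hμ)
  choose v hv0 hv using heig ω hω
  choose w hw0 hw using heig (ω ^ 2) (by linear_combination (ω ^ 2 - ω + 1) * hω)
  have hvw : ∀ g : F, wedge (v g) (w g) ≠ 0 := fun g =>
    wedge_ne_zero_of_eigenvalue_ne (hv0 g) (hw0 g) (hv g) (hw g) fun h => one_ne_zero (by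
      linear_combination hω - h - ω ^ 2 * CharTwo.two_eq_zero (R := K))
  -- an element of trace one is determined by its two eigenlines, for `ω` and for `ω²`
  let π : F → Proj K × Proj K := fun g => (mk K (v g) (hv0 g), mk K (w g) (hw0 g))
  have hπ : Function.Injective π := by
    intro g h hgh
    simp only [π, Prod.mk.injEq] at hgh
    refine Subtype.ext (SL_coe_inj.mp (eq_of_mulVec_eq_of_wedge_ne_zero (hvw h) ?_ ?_))
    · rw [mulVec_eq_smul_of_mk_eq_mk hgh.1 (hv g), hv h]
    · rw [mulVec_eq_smul_of_mk_eq_mk hgh.2 (hw g), hw h]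
  rw [← Nat.card_coe_set_eq, ← Set.ncard_range_of_injective hπ]
  calc (Set.range π).ncard ≤ 2 * (Nat.card (Proj K) - 1) := by
        refine ncard_le_of_pairwise_meet (by rw [card_proj]; omega) ?_ ?_
        · rintro _ ⟨g, rfl⟩
          exact (mk_eq_mk_iff_wedge_eq_zero _ _).not.mpr (hvw g)
        · rintro _ ⟨g, rfl⟩ _ ⟨h, rfl⟩
          simp only [π, mk_eq_mk_iff_wedge_eq_zero]
          exact wedge_eq_zero_of_trace_inv_mul hω (hv g) (hw g) (hv h) (hw h) (hvw g)
            (hF g g.2 h h.2)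
    _ = 2 * Nat.card K := by rw [card_proj, Nat.add_sub_cancel]

lemma ncard_le_of_pairwiseTraceZeroOrOne [Finite K] {ω : K} (hω : ω ^ 2 + ω + 1 = 0)
    (hK : 4 ≤ Nat.card K) {F : Set SL(2, K)} (hF : PairwiseTraceZeroOrOne F) :
    F.ncard ≤ 3 * Nat.card K := by
  rcases F.eq_empty_or_nonempty with rfl | ⟨h₀, hh₀⟩
  · simp
  -- translate so that `1 ∈ F`; then every element has trace `0` or `1`
  set F' := (h₀⁻¹ * ·) '' F
  have hF' : PairwiseTraceZeroOrOne F' := by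
    rintro _ ⟨g, hg, rfl⟩ _ ⟨h, hh, rfl⟩
    simpa [mul_assoc] using hF g hg h hh
  have hsplit : F' ⊆ {g ∈ F' | (↑ₘg).trace = 0} ∪ {g ∈ F' | (↑ₘg).trace = 1} := by
    rintro _ ⟨g, hg, rfl⟩
    exact (hF g hg h₀ hh₀).imp (⟨⟨g, hg, rfl⟩, ·⟩) (⟨⟨g, hg, rfl⟩, ·⟩)
  calc F.ncard = F'.ncard := (Set.ncard_image_of_injective _ (mul_right_injective h₀⁻¹)).symm
    _ ≤ {g ∈ F' | (↑ₘg).trace = 0}.ncard + {g ∈ F' | (↑ₘg).trace = 1}.ncard :=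
      (Set.ncard_le_ncard hsplit (Set.toFinite _)).trans (Set.ncard_union_le _ _)
    _ ≤ Nat.card K + 2 * Nat.card K := add_le_add
      (ncard_le_of_trace_eq_zero hK (hF'.mono (Set.sep_subset _ _)) fun _ hg => hg.2)
      (ncard_le_of_trace_eq_one hω (by omega) (hF'.mono (Set.sep_subset _ _)) fun _ hg => hg.2)
    _ = 3 * Nat.card K := by ring

theorem isGreatest_ncard_intersectingOnSubsets_three [Finite K] {ω : K}
    (hω : IsPrimitiveRoot ω 3) (hK : 4 ≤ Nat.card K) :
    IsGreatest {n : ℕ | ∃ F : Set SL(2, K), IntersectingOnSubsets _ K 3 F ∧ F.ncard = n}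
      (3 * Nat.card K) := by
  have hω' : ω ^ 2 + ω + 1 = 0 := by
    have := hω.geom_sum_eq_zero (by norm_num)
    simp only [Finset.sum_range_succ, Finset.sum_range_zero, pow_zero, pow_one] at this
    linear_combination this
  refine ⟨⟨_, (intersectingOnSubsets_three_iff _).mpr
    pairwiseTraceZeroOrOne_upperTriangularCubeRoots, ncard_upperTriangularCubeRoots hω⟩, ?_⟩
  rintro _ ⟨F, hF, rfl⟩
  exact ncard_le_of_pairwiseTraceZeroOrOne hω' hK ((intersectingOnSubsets_three_iff F).mp hF)

end SL2

/-- For `q = 2^(2ℓ)` with `ℓ ≥ 1`, the maximum size of an intersecting subset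
of `SL(2, F_q) ≅ PGL(2, q)` for the action on 3-element subsets of the projective line is
exactly `3q`. -/
theorem max_intersecting_sl2_three_subsets_even_power_of_two (l : ℕ) (hl : 1 ≤ l) :
    IsGreatest {n : ℕ |
        ∃ F : Set (Matrix.SpecialLinearGroup (Fin 2) (GaloisField 2 (2 * l))),
          IntersectingOnSubsets _ (GaloisField 2 (2 * l)) 3 F ∧ F.ncard = n}
      (3 * 2 ^ (2 * l)) := by
  have hcard : Nat.card (GaloisField 2 (2 * l)) = 4 ^ l := by
    rw [GaloisField.card 2 (2 * l) (by omega), pow_mul]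
    norm_num
  have h3 : 3 ∣ Nat.card (GaloisField 2 (2 * l))ˣ := by
    rw [Nat.card_units, hcard]
    simpa using Nat.sub_dvd_pow_sub_pow 4 1 l
  have : Fact (Nat.Prime 3) := ⟨Nat.prime_three⟩
  obtain ⟨ζ, hζ⟩ := exists_prime_orderOf_dvd_card' 3 h3
  have hω : IsPrimitiveRoot (ζ : GaloisField 2 (2 * l)) 3 :=
    IsPrimitiveRoot.coe_units_iff.mpr (hζ ▸ IsPrimitiveRoot.orderOf ζ)
  have hK : 4 ≤ Nat.card (GaloisField 2 (2 * l)) := by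
    rw [hcard]
    exact le_self_pow₀ (by norm_num) (by omega)
  rw [pow_mul, show 2 ^ 2 = 4 by rfl, ← hcard]
  exact isGreatest_ncard_intersectingOnSubsets_three hω hK
end

section
/- Let q = 2^(2ℓ) with ℓ ≥ 1, F_q = GaloisField 2 (2ℓ), and let x ∈ F_q satisfy x³ = 1 and x ≠ 1 (such x exists since 3 divides q − 1). Then the set B of matrices [[y, a], [0, y²]] with y ∈ {1, x, x²} and a ∈ F_q (note y² = y⁻¹ since y³ = 1) is a subgroup of SL(2,F_q) of order 3q, and B is an intersecting set with respect to the induced action on 3-element subsets of ℙ¹(F_q). -/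
open scoped Pointwise MatrixGroups

/-! An element `!![y, a; 0, y ^ 2]` of `B` fixes `∞` and acts on the affine points by
`z ↦ y ^ 2 * z + a * y`. If `y ≠ 1` it has order `3` and moves a point, whose orbit is a
stable `3`-set. If `y = 1 ≠ a`, it is an involution in characteristic `2`, and `∞` together
with a moved point and its image is a stable `3`-set. Since `B` is a group, `g • S = h • S`
as soon as `h⁻¹ * g` stabilizes `S`. -/

section OrbitTriples

variable {G X : Type*} [Group G] [MulAction G X] {g : G} {p q : X}

theorem exists_ncard_eq_three_smul_eq_of_pow_three_eq_one (hg : g ^ 3 = 1) (hp : g • p ≠ p) :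
    ∃ S : Set X, S.ncard = 3 ∧ g • S = S := by
  have hcube : g • g ^ 2 • p = p := by rw [smul_smul, ← pow_succ', hg, one_smul]
  refine ⟨{p, g • p, g ^ 2 • p},
    Set.ncard_eq_three.mpr ⟨_, _, _, hp.symm, ?_, ?_, rfl⟩, ?_⟩
  · intro h
    exact hp ((congrArg (g • ·) h).trans hcube)
  · intro h
    apply hp
    rw [pow_two, mul_smul] at h
    exact (smul_left_cancel g h).symm
  · rw [Set.smul_set_insert, Set.smul_set_insert, Set.smul_set_singleton, hcube, smul_smul,
      ← pow_two, Set.pair_comm (g ^ 2 • p), Set.insert_comm]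

theorem exists_ncard_eq_three_smul_eq_of_sq_eq_one (hg : g ^ 2 = 1) (hq : g • q = q)
    (hp : g • p ≠ p) : ∃ S : Set X, S.ncard = 3 ∧ g • S = S := by
  have hsq : g • g • p = p := by rw [smul_smul, ← pow_two, hg, one_smul]
  refine ⟨{q, p, g • p}, Set.ncard_eq_three.mpr ⟨_, _, _, ?_, ?_, hp.symm, rfl⟩, ?_⟩
  · rintro rfl
    exact hp hq
  · rintro rfl
    exact hp (hq.symm.trans hsq)
  · rw [Set.smul_set_insert, Set.smul_set_insert, Set.smul_set_singleton, hq, hsq,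
      Set.pair_comm]

end OrbitTriples

theorem Subgroup.intersectingOnSubsets_of_forall_exists_smul_eq {G K : Type*} [Group G] [Field K]
    [MulAction G (Proj K)] {k : ℕ} (B : Subgroup G)
    (hB : ∀ g ∈ B, ∃ S : Set (Proj K), S.ncard = k ∧ g • S = S) :
    IntersectingOnSubsets G K k B := by
  intro g hg h hh
  obtain ⟨S, hSk, hS⟩ := hB (h⁻¹ * g) (B.mul_mem (B.inv_mem hh) hg)
  refine ⟨S, hSk, ?_⟩
  conv_rhs => rw [← hS, smul_smul, mul_inv_cancel_left]

noncomputable section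

variable {K : Type*} [Field K]

lemma SL_smul_mk_s6 (M : SL(2, K)) (v : Fin 2 → K) (hv : v ≠ 0) :
    M • Projectivization.mk K v hv =
      Projectivization.mk K ((M : Matrix (Fin 2) (Fin 2) K).mulVec v)
        (GLmulVec_ne_zero M.toGL hv) :=
  GL_smul_mk M.toGL v hv

def affinePoint (z : K) : Proj K :=
  Projectivization.mk K ![z, 1] (fun h => by simpa using congrFun h 1)

def pointAtInfinity (K : Type*) [Field K] : Proj K :=
  Projectivization.mk K ![1, 0] (fun h => by simpa using congrFun h 0)

lemma affinePoint_injective : Function.Injective (affinePoint (K := K)) := by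
  intro z w h
  obtain ⟨c, hc⟩ := (Projectivization.mk_eq_mk_iff' _ _ _ _ _).mp h
  have h1 : c = 1 := by simpa using congrFun hc 1
  simpa [h1] using (congrFun hc 0).symm

lemma affinePoint_ne_pointAtInfinity (z : K) : affinePoint z ≠ pointAtInfinity K := by
  intro h
  obtain ⟨c, hc⟩ := (Projectivization.mk_eq_mk_iff' _ _ _ _ _).mp h
  simpa using congrFun hc 1

lemma ncard_pointAtInfinity_affinePoint_zero_one :
    ({pointAtInfinity K, affinePoint 0, affinePoint 1} : Set (Proj K)).ncard = 3 :=
  Set.ncard_eq_three.mpr ⟨_, _, _, (affinePoint_ne_pointAtInfinity 0).symm,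
    (affinePoint_ne_pointAtInfinity 1).symm, affinePoint_injective.ne zero_ne_one, rfl⟩

section UpperTriangular

variable {M : SL(2, K)} {α β δ : K} (hM : (M : Matrix (Fin 2) (Fin 2) K) = !![α, β; 0, δ])
include hM

lemma smul_pointAtInfinity_of_upperTriangular : M • pointAtInfinity K = pointAtInfinity K := by
  rw [pointAtInfinity, SL_smul_mk_s6]
  exact (Projectivization.mk_eq_mk_iff' _ _ _ _ _).mpr
    ⟨α, by ext i; fin_cases i <;> simp [hM]⟩

lemma smul_affinePoint_of_upperTriangular (z : K) :
    M • affinePoint z = affinePoint ((α * z + β) / δ) := by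
  have hδ : δ ≠ 0 :=
    right_ne_zero_of_mul_eq_one (by simpa [hM, Matrix.det_fin_two_of] using M.det_coe)
  rw [affinePoint, affinePoint, SL_smul_mk_s6]
  exact (Projectivization.mk_eq_mk_iff' _ _ _ _ _).mpr
    ⟨δ, by ext i; fin_cases i <;> simp [hM, hδ, mul_div_cancel₀, mul_comm]⟩

end UpperTriangular

lemma det_upperTriangular_of_pow_three_eq_one {y : K} (hy : y ^ 3 = 1) (a : K) :
    (!![y, a; 0, y ^ 2] : Matrix (Fin 2) (Fin 2) K).det = 1 := by
  rw [Matrix.det_fin_two_of, ← hy]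
  ring

variable (K) in
/-- The group `B` of the paper, over an arbitrary field. -/
def cubeRootBorel : Subgroup SL(2, K) where
  carrier := {M | ∃ y a : K, y ^ 3 = 1 ∧ (M : Matrix (Fin 2) (Fin 2) K) = !![y, a; 0, y ^ 2]}
  mul_mem' := by
    rintro M N ⟨y, a, hy, hM⟩ ⟨z, b, hz, hN⟩
    refine ⟨y * z, y * b + a * z ^ 2, by rw [mul_pow, hy, hz, one_mul], ?_⟩
    rw [Matrix.SpecialLinearGroup.coe_mul, hM, hN, Matrix.mul_fin_two]
    ext i j
    fin_cases i <;> fin_cases j <;> simp [mul_pow]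
  one_mem' := ⟨1, 0, one_pow 3, by simp [Matrix.one_fin_two]⟩
  inv_mem' := by
    rintro M ⟨y, a, hy, hM⟩
    refine ⟨y ^ 2, -a, by rw [← pow_mul, pow_mul', hy, one_pow], ?_⟩
    rw [Matrix.SpecialLinearGroup.coe_inv, hM, Matrix.adjugate_fin_two_of]
    ext i j
    fin_cases i <;> fin_cases j <;> simp
    linear_combination (-y) * hy

lemma mem_cubeRootBorel {M : SL(2, K)} :
    M ∈ cubeRootBorel K ↔
      ∃ y a : K, y ^ 3 = 1 ∧ (M : Matrix (Fin 2) (Fin 2) K) = !![y, a; 0, y ^ 2] :=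
  Iff.rfl

variable (K) in
def cubeRootBorelEquiv : {y : K // y ^ 3 = 1} × K ≃ cubeRootBorel K :=
  Equiv.ofBijective
    (fun p => ⟨⟨!![p.1.1, p.2; 0, p.1.1 ^ 2],
      det_upperTriangular_of_pow_three_eq_one p.1.2 p.2⟩, p.1.1, p.2, p.1.2, rfl⟩)
    ⟨fun p q h => by
      have h' := congrArg (fun M : cubeRootBorel K => (M.1 : Matrix (Fin 2) (Fin 2) K)) h
      have hy : p.1.1 = q.1.1 := by simpa using congrFun (congrFun h' 0) 0
      have ha : p.2 = q.2 := by simpa using congrFun (congrFun h' 0) 1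
      exact Prod.ext (Subtype.ext hy) ha,
    fun ⟨M, y, a, hy, hM⟩ => ⟨(⟨y, hy⟩, a), Subtype.ext (Subtype.ext hM.symm)⟩⟩

lemma card_cubeRootBorel :
    Nat.card (cubeRootBorel K) = Nat.card {y : K // y ^ 3 = 1} * Nat.card K := by
  rw [← Nat.card_prod, Nat.card_congr (cubeRootBorelEquiv K)]

lemma IsPrimitiveRoot.card_pow_eq_one {n : ℕ} {x : K} (hx : IsPrimitiveRoot x n) (hn : 0 < n) :
    Nat.card {y : K // y ^ n = 1} = n := by
  calc Nat.card {y : K // y ^ n = 1} = Nat.card (Polynomial.nthRootsFinset n (1 : K)) :=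
        Nat.card_congr <| Equiv.subtypeEquivRight fun y =>
          (Polynomial.mem_nthRootsFinset hn (1 : K)).symm
    _ = n := by rw [Nat.card_eq_finsetCard, hx.card_nthRootsFinset]

lemma IsPrimitiveRoot.pow_three_eq_one_iff {x : K} (hx : IsPrimitiveRoot x 3) {y : K} :
    y ^ 3 = 1 ↔ y = 1 ∨ y = x ∨ y = x ^ 2 := by
  constructor
  · intro hy
    obtain ⟨i, hi, rfl⟩ := hx.eq_pow_of_pow_eq_one hy
    interval_cases i <;> simp
  · rintro (rfl | rfl | rfl)
    · exact one_pow 3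
    · exact hx.pow_eq_one
    · rw [← pow_mul, pow_mul', hx.pow_eq_one, one_pow]

lemma pow_three_eq_one_of_coe_eq_upperTriangular {M : SL(2, K)} {y a : K} (hy3 : y ^ 3 = 1)
    (hy1 : y ≠ 1)
    (hM : (M : Matrix (Fin 2) (Fin 2) K) = !![y, a; 0, y ^ 2]) : M ^ 3 = 1 := by
  have hsum : y ^ 2 + y + 1 = 0 :=
    mul_left_cancel₀ (sub_ne_zero.mpr hy1) (by linear_combination hy3)
  ext i j
  fin_cases i <;> fin_cases j <;> simp [pow_succ, hM]
  · linear_combination hy3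
  · linear_combination a * y ^ 2 * hsum
  · linear_combination (y ^ 3 + 1) * hy3

lemma sq_eq_one_of_coe_eq_unipotent [CharP K 2] {M : SL(2, K)} {a : K}
    (hM : (M : Matrix (Fin 2) (Fin 2) K) = !![1, a; 0, 1]) : M ^ 2 = 1 := by
  ext i j
  fin_cases i <;> fin_cases j <;> simp [pow_succ, hM, CharTwo.add_self_eq_zero]

theorem exists_ncard_eq_three_smul_eq_of_mem_cubeRootBorel [CharP K 2] {M : SL(2, K)}
    (hM : M ∈ cubeRootBorel K) :
    ∃ S : Set (Proj K), S.ncard = 3 ∧ M • S = S := by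
  obtain ⟨y, a, hy3, hM⟩ := hM
  by_cases hy1 : y = 1
  · subst hy1
    rw [one_pow] at hM
    by_cases ha : a = 0
    · have hM1 : M = 1 := Subtype.ext <| by
        rw [hM, ha, Matrix.SpecialLinearGroup.coe_one, Matrix.one_fin_two]
      exact ⟨_, ncard_pointAtInfinity_affinePoint_zero_one, by rw [hM1, one_smul]⟩
    · refine exists_ncard_eq_three_smul_eq_of_sq_eq_one (sq_eq_one_of_coe_eq_unipotent hM)
        (smul_pointAtInfinity_of_upperTriangular hM) (p := affinePoint 0) ?_
      rw [smul_affinePoint_of_upperTriangular hM]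
      simpa using affinePoint_injective.ne ha
  · obtain ⟨p, hp⟩ : ∃ p, M • p ≠ p := by
      by_contra! hfix
      have h0 := affinePoint_injective
        ((smul_affinePoint_of_upperTriangular hM 0).symm.trans (hfix _))
      have h1 := affinePoint_injective
        ((smul_affinePoint_of_upperTriangular hM 1).symm.trans (hfix _))
      have hy0 : y ≠ 0 := by rintro rfl; simp at hy3
      field_simp at h0 h1
      exact hy1 (mul_left_cancel₀ hy0 (by linear_combination h0 - h1))
    exact exists_ncard_eq_three_smul_eq_of_pow_three_eq_one
      (pow_three_eq_one_of_coe_eq_upperTriangular hy3 hy1 hM) hp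

end

/-- For `q = 2^(2ℓ)` and `x` a primitive cube root of unity in `F_q`, the
matrices `[[y, a], [0, y²]]` with `y ∈ {1, x, x²}` and `a ∈ F_q` form a subgroup of `SL(2, F_q)`
of order `3q` which is intersecting for the action on 3-element subsets of the projective
line. -/
theorem borel_subgroup_intersecting_three_subsets (l : ℕ) (hl : 1 ≤ l)
    (x : GaloisField 2 (2 * l)) (hx3 : x ^ 3 = 1) (hx1 : x ≠ 1) :
    ∃ B : Subgroup (Matrix.SpecialLinearGroup (Fin 2) (GaloisField 2 (2 * l))),
      (B : Set (Matrix.SpecialLinearGroup (Fin 2) (GaloisField 2 (2 * l)))) =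
        {M : Matrix.SpecialLinearGroup (Fin 2) (GaloisField 2 (2 * l)) | ∃ y a : GaloisField 2 (2 * l), (y = 1 ∨ y = x ∨ y = x ^ 2) ∧
          (M : Matrix (Fin 2) (Fin 2) (GaloisField 2 (2 * l))) = !![y, a; 0, y ^ 2]} ∧
      Nat.card B = 3 * 2 ^ (2 * l) ∧
      IntersectingOnSubsets _ (GaloisField 2 (2 * l)) 3
        (B : Set (Matrix.SpecialLinearGroup (Fin 2) (GaloisField 2 (2 * l)))) := by
  have hx : IsPrimitiveRoot x 3 := isPrimitiveRoot_of_mem_nthRootsFinset Nat.prime_three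
    ((Polynomial.mem_nthRootsFinset three_pos 1).mpr hx3) hx1
  refine ⟨cubeRootBorel _, ?_, ?_, ?_⟩
  · ext M
    simp only [SetLike.mem_coe, mem_cubeRootBorel, hx.pow_three_eq_one_iff, Set.mem_ofPred_eq]
  · rw [card_cubeRootBorel, hx.card_pow_eq_one three_pos, GaloisField.card 2 (2 * l) (by omega)]
  · exact (cubeRootBorel _).intersectingOnSubsets_of_forall_exists_smul_eq
      fun M hM => exists_ncard_eq_three_smul_eq_of_mem_cubeRootBorel hM
end
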